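/- Let A ∈ ℝ^{n×n} be symmetric with nonzero rows a_i, r ∈ ℝⁿ, ℓ ∈ ℕ, and let r' = r − (⟨a_i, r⟩/‖a_i‖²) a_i with i chosen with probability ‖a_i‖²/‖A‖_F². Then E‖A^ℓ r'‖² = ‖A^ℓ r‖² − (2/‖A‖_F²)‖A^{ℓ+1} r‖² + (1/‖A‖_F²) Σ_{i=1}^n ⟨a_i, r⟩² ‖A^ℓ a_i‖²/‖a_i‖². -/

import Mathlib

open RealInnerProductSpace Finset Matrix
noncomputable section

/-- Coercion of a plain vector to Euclidean space (for norms and inner products). -/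
def toE {n : ℕ} (v : Fin n → ℝ) : EuclideanSpace ℝ (Fin n) := WithLp.toLp 2 v

/-!
Expanding the square, the `i`-th term is `‖A^ℓ r‖² - 2 cᵢ ⟪A^ℓ r, A^ℓ aᵢ⟫ + cᵢ² ‖A^ℓ aᵢ‖²` with
`cᵢ = ⟪aᵢ, r⟫ / ‖aᵢ‖²`. The weight `‖aᵢ‖²` cancels the denominator of the cross term, and
`∑ᵢ ⟪aᵢ, r⟫ aᵢ = Aᵀ A r`, so for symmetric `A` the cross terms add up to `‖A^(ℓ+1) r‖²`.
-/

lemma inner_toE {n : ℕ} (u v : Fin n → ℝ) : ⟪toE u, toE v⟫ = u ⬝ᵥ v := by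
  simp [toE, PiLp.inner_apply, dotProduct, RCLike.inner_apply, mul_comm]

lemma norm_sq_toE {n : ℕ} (v : Fin n → ℝ) : ‖toE v‖ ^ 2 = v ⬝ᵥ v := by
  rw [← real_inner_self_eq_norm_sq, inner_toE]

namespace Matrix

variable {m : Type*} [Fintype m]

lemma sub_smul_dotProduct_sub_smul {R : Type*} [CommRing R] (u v : m → R) (c : R) :
    (u - c • v) ⬝ᵥ (u - c • v) = u ⬝ᵥ u - 2 * c * (u ⬝ᵥ v) + c ^ 2 * (v ⬝ᵥ v) := by
  simp only [sub_dotProduct, dotProduct_sub, smul_dotProduct, dotProduct_smul, smul_eq_mul,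
    dotProduct_comm v u]
  ring

lemma dotProduct_self_mul_sub_smul_dotProduct (a r x v : m → ℝ) :
    (a ⬝ᵥ a) * ((x - (a ⬝ᵥ r / a ⬝ᵥ a) • v) ⬝ᵥ (x - (a ⬝ᵥ r / a ⬝ᵥ a) • v))
      = (a ⬝ᵥ a) * (x ⬝ᵥ x) - 2 * ((a ⬝ᵥ r) * (x ⬝ᵥ v))
        + (a ⬝ᵥ r) ^ 2 * (v ⬝ᵥ v) / (a ⬝ᵥ a) := by
  by_cases ha : a ⬝ᵥ a = 0
  · obtain rfl : a = 0 := dotProduct_self_eq_zero.mp ha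
    simp
  · rw [sub_smul_dotProduct_sub_smul]
    field_simp

lemma sum_dotProduct_mul_dotProduct_mulVec {R : Type*} [CommSemiring R] {k l : Type*}
    [Fintype k] [Fintype l] (A : Matrix m k R) (B : Matrix l k R) (r : k → R) (x : l → R) :
    ∑ i, (A i ⬝ᵥ r) * (x ⬝ᵥ B *ᵥ A i) = (A *ᵥ r) ⬝ᵥ (A *ᵥ (x ᵥ* B)) := by
  have row_eq (i : m) : x ⬝ᵥ B *ᵥ A i = (A *ᵥ (x ᵥ* B)) i := by
    rw [dotProduct_mulVec, dotProduct_comm]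
    rfl
  simp only [row_eq]
  rfl

variable [DecidableEq m]

lemma IsSymm.pow_mulVec_dotProduct_pow_mulVec {R : Type*} [CommSemiring R] {A : Matrix m m R}
    (hA : A.IsSymm) (a b : ℕ) (u v : m → R) :
    (A ^ a *ᵥ u) ⬝ᵥ (A ^ b *ᵥ v) = u ⬝ᵥ (A ^ (a + b) *ᵥ v) := by
  rw [dotProduct_comm, dotProduct_mulVec, ← mulVec_transpose, (hA.pow a).eq, mulVec_mulVec,
    ← pow_add, dotProduct_comm]

variable {A : Matrix m m ℝ}

lemma IsSymm.sum_dotProduct_row_mul_dotProduct_pow_mulVec (hA : A.IsSymm) (r : m → ℝ) (ℓ : ℕ) :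
    ∑ i, (A i ⬝ᵥ r) * ((A ^ ℓ *ᵥ r) ⬝ᵥ (A ^ ℓ *ᵥ A i))
      = (A ^ (ℓ + 1) *ᵥ r) ⬝ᵥ (A ^ (ℓ + 1) *ᵥ r) := by
  have h_odd := hA.pow_mulVec_dotProduct_pow_mulVec 1 (ℓ + ℓ + 1) r r
  rw [pow_one] at h_odd
  rw [sum_dotProduct_mul_dotProduct_mulVec, ← mulVec_transpose, (hA.pow ℓ).eq, mulVec_mulVec,
    mulVec_mulVec, mul_assoc, ← pow_add, ← pow_succ', h_odd, hA.pow_mulVec_dotProduct_pow_mulVec]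
  ring_nf

lemma IsSymm.sum_weighted_kaczmarz (hA : A.IsSymm) (hS : ∑ j, A j ⬝ᵥ A j ≠ 0)
    (r : m → ℝ) (ℓ : ℕ) :
    ∑ i, (A i ⬝ᵥ A i / ∑ j, A j ⬝ᵥ A j) *
        ((A ^ ℓ *ᵥ (r - (A i ⬝ᵥ r / A i ⬝ᵥ A i) • A i)) ⬝ᵥ
          (A ^ ℓ *ᵥ (r - (A i ⬝ᵥ r / A i ⬝ᵥ A i) • A i)))
      = (A ^ ℓ *ᵥ r) ⬝ᵥ (A ^ ℓ *ᵥ r)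
        - (2 / ∑ j, A j ⬝ᵥ A j) * ((A ^ (ℓ + 1) *ᵥ r) ⬝ᵥ (A ^ (ℓ + 1) *ᵥ r))
        + (1 / ∑ j, A j ⬝ᵥ A j) *
            ∑ i, (A i ⬝ᵥ r) ^ 2 * ((A ^ ℓ *ᵥ A i) ⬝ᵥ (A ^ ℓ *ᵥ A i)) / (A i ⬝ᵥ A i) := by
  simp_rw [mulVec_sub, mulVec_smul, div_mul_eq_mul_div _ _ (_ ⬝ᵥ _),
    dotProduct_self_mul_sub_smul_dotProduct, ← sum_div, sum_add_distrib, sum_sub_distrib,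
    ← sum_mul, ← mul_sum, hA.sum_dotProduct_row_mul_dotProduct_pow_mulVec]
  field_simp

end Matrix

/-- Exact one-step identity for `E ‖A^ℓ r'‖²` for symmetric `A`. -/
theorem kaczmarz_one_step_identity_pow {n : ℕ} (A : Matrix (Fin n) (Fin n) ℝ)
    (hsym : Aᵀ = A) (hrows : ∀ i, A i ≠ 0) (r : Fin n → ℝ) (ℓ : ℕ) :
    ∑ i, (‖toE (A i)‖ ^ 2 / (∑ j, ‖toE (A j)‖ ^ 2)) *
        ‖toE ((A ^ ℓ).mulVec (r - (⟪toE (A i), toE r⟫ / ‖toE (A i)‖ ^ 2) • A i))‖ ^ 2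
      = ‖toE ((A ^ ℓ).mulVec r)‖ ^ 2
        - (2 / (∑ j, ‖toE (A j)‖ ^ 2)) * ‖toE ((A ^ (ℓ + 1)).mulVec r)‖ ^ 2
        + (1 / (∑ j, ‖toE (A j)‖ ^ 2)) *
            ∑ i, ⟪toE (A i), toE r⟫ ^ 2 * ‖toE ((A ^ ℓ).mulVec (A i))‖ ^ 2 / ‖toE (A i)‖ ^ 2 := by
  rcases isEmpty_or_nonempty (Fin n) with _ | _
  · have norm_eq_zero (v : Fin n → ℝ) : ‖toE v‖ = 0 := by
      rw [Subsingleton.elim (toE v) 0, norm_zero]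
    simp [norm_eq_zero]
  have hS : ∑ j, A j ⬝ᵥ A j ≠ 0 := by
    refine (sum_pos (fun j _ => ?_) univ_nonempty).ne'
    simpa using dotProduct_self_star_pos_iff.mpr (hrows j)
  simp only [norm_sq_toE, inner_toE]
  exact IsSymm.sum_weighted_kaczmarz hsym hS r ℓ
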